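/- Let F be a continuous strictly increasing CDF on [0,1] and let (q_α, q_β) solve F(q_β) − F(q_α) = α and ∫_{q_α}^{q_β} μ dF + 1 − F(q_β) = β with α ∈ (0,β), α+β < 1. Then the two-stage value V*(α) = ∫_{q_α}^1 μ dF(μ) satisfies V*(α) ≥ ∫_{F^{-1}(1−β)}^1 μ dF(μ) = V*(0), with strict inequality whenever F assigns positive mass to risk scores strictly between 0 and 1 within the band. -/

import Mathlib

/-!
Inside the screening band the scores satisfy `μ < 1`, so `∫_{q_α}^{q_β} μ dF < F(q_β) - F(q_α) = α`.
The allocation constraint then gives `F(q_α) < 1 - β = F(F⁻¹(1 - β))`, hence `q_α < F⁻¹(1 - β)`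
by strict monotonicity of `F`, and `V*(α) - V*(0) = ∫_{q_α}^{F⁻¹(1-β)} μ dF > 0`.
-/

open Set MeasureTheory intervalIntegral

section

variable {F f : ℝ → ℝ} {a b : ℝ}

theorem intervalIntegrable_of_hasDerivAt_of_nonneg (hab : a ≤ b)
    (hF : ∀ x ∈ Icc a b, HasDerivAt F (f x) x) (hf : ∀ x ∈ Ioo a b, 0 ≤ f x) :
    IntervalIntegrable f volume a b :=
  (intervalIntegrable_iff_integrableOn_Ioc_of_le hab).2 <|
    integrableOn_deriv_of_nonneg (HasDerivAt.continuousOn hF)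
      (fun x hx => hF x (Ioo_subset_Icc_self hx)) hf

theorem strictMonoOn_of_hasDerivAt_pos (hF : ∀ x ∈ Icc a b, HasDerivAt F (f x) x)
    (hf : ∀ x ∈ Ioo a b, 0 < f x) : StrictMonoOn F (Icc a b) :=
  strictMonoOn_of_deriv_pos (convex_Icc a b) (HasDerivAt.continuousOn hF) fun x hx => by
    rw [interior_Icc] at hx
    rw [(hF x (Ioo_subset_Icc_self hx)).deriv]
    exact hf x hx

theorem IntervalIntegrable.id_mul (hfi : IntervalIntegrable f volume a b) :
    IntervalIntegrable (fun x => x * f x) volume a b :=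
  hfi.continuousOn_mul (continuousOn_id' _)

theorem integral_id_mul_lt_integral (hab : a < b) (hb : b ≤ 1) (hf : ∀ x ∈ Ioo a b, 0 < f x)
    (hfi : IntervalIntegrable f volume a b) :
    ∫ x in a..b, x * f x < ∫ x in a..b, f x := by
  rw [← sub_pos, ← integral_sub hfi hfi.id_mul]
  refine intervalIntegral_pos_of_pos_on (hfi.sub hfi.id_mul) (fun x hx => ?_) hab
  have hx1 : 0 < 1 - x := by linarith [hx.2]
  have : f x - x * f x = (1 - x) * f x := by ring
  simpa only [this] using mul_pos hx1 (hf x hx)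

theorem integral_id_mul_lt_sub_of_hasDerivAt (hab : a < b) (hb : b ≤ 1)
    (hF : ∀ x ∈ Icc a b, HasDerivAt F (f x) x) (hf : ∀ x ∈ Ioo a b, 0 < f x) :
    ∫ x in a..b, x * f x < F b - F a := by
  have hfi := intervalIntegrable_of_hasDerivAt_of_nonneg hab.le hF fun x hx => (hf x hx).le
  rw [← integral_eq_sub_of_hasDerivAt_of_le hab.le (HasDerivAt.continuousOn hF)
    (fun x hx => hF x (Ioo_subset_Icc_self hx)) hfi]
  exact integral_id_mul_lt_integral hab hb hf hfi

theorem integral_id_mul_pos (ha : 0 ≤ a) (hab : a < b) (hf : ∀ x ∈ Ioo a b, 0 < f x)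
    (hfi : IntervalIntegrable f volume a b) : 0 < ∫ x in a..b, x * f x :=
  intervalIntegral_pos_of_pos_on hfi.id_mul
    (fun x hx => mul_pos (ha.trans_lt hx.1) (hf x hx)) hab

end

theorem screening_improves_value_general
    (F f : ℝ → ℝ) (α β qα qβ qt : ℝ)
    (hα : 0 < α)
    (hFderiv : ∀ x ∈ Set.Icc (0:ℝ) 1, HasDerivAt F (f x) x)
    (hfpos : ∀ x ∈ Set.Icc (0:ℝ) 1, 0 < f x)
    (hqα0 : 0 ≤ qα) (hband : qα ≤ qβ) (hqβ1 : qβ ≤ 1)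
    (hscreen : F qβ - F qα = α)
    (halloc : (∫ μ in qα..qβ, μ * f μ) + 1 - F qβ = β)
    (hqt : F qt = 1 - β) (hqt01 : qt ∈ Set.Icc (0:ℝ) 1) :
    ((∫ μ in qt..1, μ * f μ) ≤ ∫ μ in qα..1, μ * f μ) ∧
    (0 < ∫ μ in (max qα 0)..(min qβ 1), f μ →
      (∫ μ in qt..1, μ * f μ) < ∫ μ in qα..1, μ * f μ) := by
  have hF {c d : ℝ} (hc : 0 ≤ c) (hd : d ≤ 1) : ∀ x ∈ Icc c d, HasDerivAt F (f x) x :=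
    fun x hx => hFderiv x (Icc_subset_Icc hc hd hx)
  have hf {c d : ℝ} (hc : 0 ≤ c) (hd : d ≤ 1) : ∀ x ∈ Ioo c d, 0 < f x :=
    fun x hx => hfpos x (Icc_subset_Icc hc hd (Ioo_subset_Icc_self hx))
  have hfi {c d : ℝ} (hc : 0 ≤ c) (hcd : c ≤ d) (hd : d ≤ 1) : IntervalIntegrable f volume c d :=
    intervalIntegrable_of_hasDerivAt_of_nonneg hcd (hF hc hd) fun x hx => (hf hc hd x hx).le
  have hqαβ : qα < qβ := hband.lt_of_ne <| by rintro rfl; linarith [sub_self (F qα)]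
  have hband_lt : ∫ μ in qα..qβ, μ * f μ < α :=
    hscreen ▸ integral_id_mul_lt_sub_of_hasDerivAt hqαβ hqβ1 (hF hqα0 hqβ1) (hf hqα0 hqβ1)
  have hqαt : qα < qt :=
    ((strictMonoOn_of_hasDerivAt_pos (hF le_rfl le_rfl) (hf le_rfl le_rfl)).lt_iff_lt
      ⟨hqα0, hband.trans hqβ1⟩ hqt01).1 (by linarith)
  have hgain : 0 < ∫ μ in qα..qt, μ * f μ :=
    integral_id_mul_pos hqα0 hqαt (hf hqα0 hqt01.2) (hfi hqα0 hqαt.le hqt01.2)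
  have hsplit := integral_add_adjacent_intervals
    (hfi hqα0 hqαt.le hqt01.2).id_mul (hfi hqt01.1 hqt01.2 le_rfl).id_mul
  have hlt : ∫ μ in qt..1, μ * f μ < ∫ μ in qα..1, μ * f μ := by linarith
  exact ⟨hlt.le, fun _ => hlt⟩

/-- The value of screening: the optimal two-stage value `V*(α) = ∫_{q_α}^1 μ dF`
dominates the purely algorithmic value `V*(0) = ∫_{F⁻¹(1-β)}^1 μ dF`, with strict
inequality whenever the screening band carries positive `F`-mass of risk scores
strictly between 0 and 1. -/
theorem screening_improves_value
    (F f : ℝ → ℝ) (α β qα qβ qt : ℝ)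
    (hα : 0 < α) (hαβ : α < β) (hβ : β < 1) (hsum : α + β < 1)
    (hFderiv : ∀ x ∈ Set.Icc (0:ℝ) 1, HasDerivAt F (f x) x)
    (hfpos : ∀ x ∈ Set.Icc (0:ℝ) 1, 0 < f x)
    (hF0 : F 0 = 0) (hF1 : F 1 = 1)
    (hqα0 : 0 ≤ qα) (hband : qα ≤ qβ) (hqβ1 : qβ ≤ 1)
    (hscreen : F qβ - F qα = α)
    (halloc : (∫ μ in qα..qβ, μ * f μ) + 1 - F qβ = β)
    (hqt : F qt = 1 - β) (hqt01 : qt ∈ Set.Icc (0:ℝ) 1) :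
    ((∫ μ in qt..1, μ * f μ) ≤ ∫ μ in qα..1, μ * f μ) ∧
    (0 < ∫ μ in (max qα 0)..(min qβ 1), f μ →
      (∫ μ in qt..1, μ * f μ) < ∫ μ in qα..1, μ * f μ) :=
  screening_improves_value_general F f α β qα qβ qt hα hFderiv hfpos hqα0 hband hqβ1 hscreen halloc
    hqt hqt01
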